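/- arXiv:2206.11852 — 2 statements merged into one kernel-verified Lean document; each statement's English description precedes it below -/
import Mathlib

section
/- Characterization of 2-input 2-output nonsignalling boxes with singular disagreement: a nonsignalling box P with inputs x,y ∈ {0,1} and outputs a,b ∈ {0,1} exhibits singular disagreement if and only if there exist reals r, s, t, u with s > 0, s + t ≠ 0, and u + t ≠ 1 such that all sixteen entries below are nonnegative and P(0,0|0,0)=s, P(0,1|0,0)=t, P(1,0|0,0)=1−s−u−t, P(1,1|0,0)=u; P(0,0|0,1)=0, P(0,1|0,1)=s+t, P(1,0|0,1)=r, P(1,1|0,1)=1−s−t−r; P(0,0|1,0)=1−u−t, P(0,1|1,0)=u+t+r−1, P(1,0|1,0)=0, P(1,1|1,0)=1−r; P(0,0|1,1)=r, P(0,1|1,1)=0, P(1,0|1,1)=0, P(1,1|1,1)=1−r. -/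
open Finset
open scoped ComplexOrder

attribute [local instance] Classical.propDecidable

noncomputable section

/-- A bipartite box `P a b x y = P(a,b|x,y)`: nonnegative entries summing to one over
the outputs, for every pair of inputs. -/
def IsBox {nA nB nX nY : ℕ} (P : Fin nA → Fin nB → Fin nX → Fin nY → ℝ) : Prop :=
  (∀ a b x y, 0 ≤ P a b x y) ∧ ∀ x y, ∑ a, ∑ b, P a b x y = 1

/-- A bipartite box is nonsignalling if Alice's output marginal does not depend on
Bob's input and vice versa. -/
def NonSignallingBox {nA nB nX nY : ℕ}
    (P : Fin nA → Fin nB → Fin nX → Fin nY → ℝ) : Prop :=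
  (∀ a x y y', ∑ b, P a b x y = ∑ b, P a b x y') ∧
  (∀ b y x x', ∑ a, P a b x y = ∑ a, P a b x' y)

/-- A quantum box: realised by local POVMs on a shared bipartite quantum state. -/
def IsQuantumBox {nA nB nX nY : ℕ}
    (P : Fin nA → Fin nB → Fin nX → Fin nY → ℝ) : Prop :=
  ∃ (dA dB : ℕ) (ρ : Matrix (Fin dA × Fin dB) (Fin dA × Fin dB) ℂ)
    (E : Fin nX → Fin nA → Matrix (Fin dA) (Fin dA) ℂ)
    (F : Fin nY → Fin nB → Matrix (Fin dB) (Fin dB) ℂ),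
    ρ.PosSemidef ∧ ρ.trace = 1 ∧
    (∀ x a, (E x a).PosSemidef) ∧ (∀ x, ∑ a, E x a = 1) ∧
    (∀ y b, (F y b).PosSemidef) ∧ (∀ y, ∑ b, F y b = 1) ∧
    ∀ a b x y, (P a b x y : ℂ) =
      ∑ q : Fin dA × Fin dB, ∑ q' : Fin dA × Fin dB,
        E x a q.1 q'.1 * F y b q.2 q'.2 * ρ q' q

/-- The pair of output sets `(αₙ, βₙ)` of the agreement argument for boxes:
`α₀` is the set of Alice's outputs (on input `x0`) for which she assigns conditional
probability `qA` to Bob outputting `b1` on input `y1` (similarly `β₀` for Bob), and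
`α_{n+1}` (resp. `β_{n+1}`) is the subset of `αₙ` (resp. `βₙ`) at which Alice (resp.
Bob) is moreover certain, on inputs `(x0, y0)`, that Bob's (resp. Alice's) output lies
in `βₙ` (resp. `αₙ`). -/
def ccdSets {nA nB nX nY : ℕ} (P : Fin nA → Fin nB → Fin nX → Fin nY → ℝ)
    (x0 x1 : Fin nX) (y0 y1 : Fin nY) (a1 : Fin nA) (b1 : Fin nB) (qA qB : ℝ) :
    ℕ → Finset (Fin nA) × Finset (Fin nB)
  | 0 => (univ.filter fun a => P a b1 x0 y1 / (∑ b, P a b x0 y1) = qA,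
          univ.filter fun b => P a1 b x1 y0 / (∑ a, P a b x1 y0) = qB)
  | n + 1 =>
      let s := ccdSets P x0 x1 y0 y1 a1 b1 qA qB n
      (s.1.filter fun a => (∑ b ∈ s.2, P a b x0 y0) / (∑ b, P a b x0 y0) = 1,
       s.2.filter fun b => (∑ a ∈ s.1, P a b x0 y0) / (∑ a, P a b x0 y0) = 1)

/-- A box exhibits **common certainty of disagreement** (at inputs/outputs `(0,0,0,0)`,
about the outputs of interest `(1,1)` on inputs `(1,1)`) if: the outputs on inputs
`(1,1)` are perfectly correlated, the event `(0,0,0,0)` has positive probability, and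
there are `q_A ≠ q_B` in `[0,1]` with `0 ∈ αₙ` and `0 ∈ βₙ` for every `n`. -/
def HasCCD {nA nB nX nY : ℕ} (hA : 2 ≤ nA) (hB : 2 ≤ nB) (hX : 2 ≤ nX) (hY : 2 ≤ nY)
    (P : Fin nA → Fin nB → Fin nX → Fin nY → ℝ) : Prop :=
  let a0 : Fin nA := ⟨0, by omega⟩
  let a1 : Fin nA := ⟨1, hA⟩
  let b0 : Fin nB := ⟨0, by omega⟩
  let b1 : Fin nB := ⟨1, hB⟩
  let x0 : Fin nX := ⟨0, by omega⟩
  let x1 : Fin nX := ⟨1, hX⟩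
  let y0 : Fin nY := ⟨0, by omega⟩
  let y1 : Fin nY := ⟨1, hY⟩
  (∀ (a : Fin nA) (b : Fin nB), (a : ℕ) ≠ (b : ℕ) → P a b x1 y1 = 0) ∧
  0 < P a0 b0 x0 y0 ∧
  ∃ qA qB : ℝ, qA ∈ Set.Icc (0 : ℝ) 1 ∧ qB ∈ Set.Icc (0 : ℝ) 1 ∧ qA ≠ qB ∧
    ∀ n : ℕ, a0 ∈ (ccdSets P x0 x1 y0 y1 a1 b1 qA qB n).1 ∧
             b0 ∈ (ccdSets P x0 x1 y0 y1 a1 b1 qA qB n).2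

/-- A box exhibits **singular disagreement** if: the outputs on inputs `(1,1)` are
perfectly correlated, the event `(0,0,0,0)` has positive probability, and the
well-defined conditional probabilities satisfy `P(b=1|a=0,x=0,y=1) = 1` and
`P(a=1|b=0,x=1,y=0) = 0`. -/
def HasSD {nA nB nX nY : ℕ} (hA : 2 ≤ nA) (hB : 2 ≤ nB) (hX : 2 ≤ nX) (hY : 2 ≤ nY)
    (P : Fin nA → Fin nB → Fin nX → Fin nY → ℝ) : Prop :=
  let a0 : Fin nA := ⟨0, by omega⟩
  let a1 : Fin nA := ⟨1, hA⟩
  let b0 : Fin nB := ⟨0, by omega⟩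
  let b1 : Fin nB := ⟨1, hB⟩
  let x0 : Fin nX := ⟨0, by omega⟩
  let x1 : Fin nX := ⟨1, hX⟩
  let y0 : Fin nY := ⟨0, by omega⟩
  let y1 : Fin nY := ⟨1, hY⟩
  (∀ (a : Fin nA) (b : Fin nB), (a : ℕ) ≠ (b : ℕ) → P a b x1 y1 = 0) ∧
  0 < P a0 b0 x0 y0 ∧
  (0 < ∑ b, P a0 b x0 y1 ∧ P a0 b1 x0 y1 / (∑ b, P a0 b x0 y1) = 1) ∧
  (0 < ∑ a, P a b0 x1 y0 ∧ P a1 b0 x1 y0 / (∑ a, P a b0 x1 y0) = 0)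

/-! With positive denominators, the two conditional-probability conditions of singular
disagreement say exactly that `P(0,0|0,1) = 0` and `P(1,0|1,0) = 0`, and that the
conditioning events `a = 0` (at `x = 0, y = 1`) and `b = 0` (at `x = 1, y = 0`) have
positive probability. Together with the two zeros forced by perfect correlation at `(1,1)`,
normalisation and no-signalling express every entry through `r = P(0,0|1,1)`,
`s = P(0,0|0,0)`, `t = P(0,1|0,0)` and `u = P(1,1|0,0)`; the two conditioning events then
have probabilities `s + t` and `1 - u - t`. -/

section ConditionalProbability

variable {K : Type*} [Field K] [Preorder K] {p q : K}

theorem add_pos_and_div_add_eq_one_iff :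
    (0 < p + q ∧ q / (p + q) = 1) ↔ (p = 0 ∧ 0 < q) := by
  constructor
  · rintro ⟨hpos, hdiv⟩
    have hp : p = 0 := by
      simpa using ((div_eq_one_iff_eq hpos.ne').mp hdiv).symm
    exact ⟨hp, by simpa [hp] using hpos⟩
  · rintro ⟨rfl, hq⟩
    simp [hq, hq.ne']

theorem add_pos_and_div_add_eq_zero_iff :
    (0 < p + q ∧ q / (p + q) = 0) ↔ (q = 0 ∧ 0 < p) := by
  constructor
  · rintro ⟨hpos, hdiv⟩
    have hq : q = 0 := (div_eq_zero_iff.mp hdiv).resolve_right hpos.ne'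
    exact ⟨hq, by simpa [hq] using hpos⟩
  · rintro ⟨rfl, hp⟩
    simp [hp]

end ConditionalProbability

theorem fin_two_offDiag_eq_zero_iff {M : Type*} [Zero M] (f : Fin 2 → Fin 2 → M) :
    (∀ a b : Fin 2, (a : ℕ) ≠ b → f a b = 0) ↔ f 0 1 = 0 ∧ f 1 0 = 0 := by
  simp [Fin.forall_fin_two]

theorem hasSD_fin_two_iff (P : Fin 2 → Fin 2 → Fin 2 → Fin 2 → ℝ) :
    HasSD (le_refl 2) (le_refl 2) (le_refl 2) (le_refl 2) P ↔
      (P 0 1 1 1 = 0 ∧ P 1 0 1 1 = 0) ∧ 0 < P 0 0 0 0 ∧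
      (P 0 0 0 1 = 0 ∧ 0 < P 0 1 0 1) ∧ (P 1 0 1 0 = 0 ∧ 0 < P 0 0 1 0) := by
  simp only [HasSD, Fin.sum_univ_two]
  exact and_congr (fin_two_offDiag_eq_zero_iff fun a b => P a b 1 1) <| Iff.rfl.and <|
    add_pos_and_div_add_eq_one_iff.and add_pos_and_div_add_eq_zero_iff

theorem NonSignallingBox.entries_of_eq_zero {P : Fin 2 → Fin 2 → Fin 2 → Fin 2 → ℝ}
    (hsum : ∀ x y, ∑ a, ∑ b, P a b x y = 1) (hns : NonSignallingBox P)
    (h0001 : P 0 0 0 1 = 0) (h1010 : P 1 0 1 0 = 0) (h0111 : P 0 1 1 1 = 0)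
    (h1011 : P 1 0 1 1 = 0) :
    P 1 0 0 0 = 1 - P 0 0 0 0 - P 1 1 0 0 - P 0 1 0 0 ∧
    P 0 1 0 1 = P 0 0 0 0 + P 0 1 0 0 ∧ P 1 0 0 1 = P 0 0 1 1 ∧
    P 1 1 0 1 = 1 - P 0 0 0 0 - P 0 1 0 0 - P 0 0 1 1 ∧
    P 0 0 1 0 = 1 - P 1 1 0 0 - P 0 1 0 0 ∧
    P 0 1 1 0 = P 1 1 0 0 + P 0 1 0 0 + P 0 0 1 1 - 1 ∧
    P 1 1 1 0 = 1 - P 0 0 1 1 ∧ P 1 1 1 1 = 1 - P 0 0 1 1 := by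
  have n00 := hsum 0 0
  have n01 := hsum 0 1
  have n10 := hsum 1 0
  have n11 := hsum 1 1
  have alice0 := hns.1 0 0 0 1
  have alice1 := hns.1 1 1 0 1
  have bob00 := hns.2 0 0 0 1
  have bob01 := hns.2 0 1 0 1
  simp only [Fin.sum_univ_two] at *
  refine ⟨?_, ?_, ?_, ?_, ?_, ?_, ?_, ?_⟩ <;> linarith

/-- **Characterisation of 2-input 2-output nonsignalling boxes with singular
disagreement.** Such a box exhibits singular disagreement iff its entries take the
tabulated form, for parameters `r, s, t, u` with `s > 0`, `s + t ≠ 0` and `u + t ≠ 1`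
making all sixteen entries nonnegative. -/
theorem sd_characterisation (P : Fin 2 → Fin 2 → Fin 2 → Fin 2 → ℝ)
    (hbox : IsBox P) (hns : NonSignallingBox P) :
    HasSD (le_refl 2) (le_refl 2) (le_refl 2) (le_refl 2) P ↔
    ∃ r s t u : ℝ, 0 < s ∧ s + t ≠ 0 ∧ u + t ≠ 1 ∧
      (0 ≤ s ∧ 0 ≤ t ∧ 0 ≤ 1 - s - u - t ∧ 0 ≤ u ∧
       0 ≤ s + t ∧ 0 ≤ r ∧ 0 ≤ 1 - s - t - r ∧
       0 ≤ 1 - u - t ∧ 0 ≤ u + t + r - 1 ∧ 0 ≤ 1 - r) ∧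
      P 0 0 0 0 = s ∧ P 0 1 0 0 = t ∧ P 1 0 0 0 = 1 - s - u - t ∧ P 1 1 0 0 = u ∧
      P 0 0 0 1 = 0 ∧ P 0 1 0 1 = s + t ∧ P 1 0 0 1 = r ∧ P 1 1 0 1 = 1 - s - t - r ∧
      P 0 0 1 0 = 1 - u - t ∧ P 0 1 1 0 = u + t + r - 1 ∧ P 1 0 1 0 = 0 ∧
        P 1 1 1 0 = 1 - r ∧
      P 0 0 1 1 = r ∧ P 0 1 1 1 = 0 ∧ P 1 0 1 1 = 0 ∧ P 1 1 1 1 = 1 - r := by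
  obtain ⟨hnonneg, hsum⟩ := hbox
  rw [hasSD_fin_two_iff]
  constructor
  · rintro ⟨⟨h0111, h1011⟩, h0000, ⟨h0001, h0101⟩, ⟨h1010, h0010⟩⟩
    obtain ⟨e1000, e0101, e1001, e1101, e0010, e0110, e1110, e1111⟩ :=
      hns.entries_of_eq_zero hsum h0001 h1010 h0111 h1011
    refine ⟨P 0 0 1 1, P 0 0 0 0, P 0 1 0 0, P 1 1 0 0, h0000, e0101 ▸ h0101.ne',
      fun h => h0010.ne' (by linarith), ⟨hnonneg 0 0 0 0, hnonneg 0 1 0 0,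
        e1000 ▸ hnonneg 1 0 0 0, hnonneg 1 1 0 0, e0101 ▸ hnonneg 0 1 0 1, hnonneg 0 0 1 1,
        e1101 ▸ hnonneg 1 1 0 1, e0010 ▸ hnonneg 0 0 1 0, e0110 ▸ hnonneg 0 1 1 0,
        e1111 ▸ hnonneg 1 1 1 1⟩,
      rfl, rfl, e1000, rfl, h0001, e0101, e1001, e1101, e0010, e0110, h1010, e1110,
      rfl, h0111, h1011, e1111⟩
  · rintro ⟨r, s, t, u, hs, hst, hut, ⟨-, -, -, -, hst_nonneg, -, -, hut_nonneg, -, -⟩,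
      h0000, -, -, -, h0001, h0101, -, -, h0010, -, h1010, -, -, h0111, h1011, -⟩
    refine ⟨⟨h0111, h1011⟩, h0000 ▸ hs, ⟨h0001, h0101 ▸ hst_nonneg.lt_of_ne' hst⟩,
      ⟨h1010, h0010 ▸ hut_nonneg.lt_of_ne' (by rw [sub_sub, sub_ne_zero]; exact hut.symm)⟩⟩
end
end

section
/- Quantum agents cannot disagree singularly: no quantum box, with arbitrary finite input sets X, Y containing {0,1} and finite output sets A, B containing {0,1}, can exhibit singular disagreement. -/
/-! In a quantum realization an event of probability zero annihilates the state: `tr(Sρ) = 0`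
with `S, ρ ⪰ 0` forces `Sρ = 0`. Singular disagreement produces four such null events. Writing
`a₀, a₁` for Alice's and `b₀, b₁` for Bob's effects lifted to the joint space, they give
`a₀ρ = a₀b₁ρ = a₀a₁b₁ρ = a₀a₁ρ`, and since Alice's effects commute with Bob's,
`a₀b₀ρ = a₀a₁b₀ρ = 0`, so that `P(0,0|0,0) = tr(a₀b₀ρ) = 0`. -/

open Finset
open scoped ComplexOrder

attribute [local instance] Classical.propDecidable

noncomputable section

open Matrix
open scoped Kronecker MatrixOrder

theorem mul_mul_eq_zero_of_singular_disagreement {R : Type*} [Semiring R]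
    {ρ a₀ a₁ a₁' b₀ b₁ b₁' : R} (ha₁ : a₁ + a₁' = 1) (hb₁ : b₁ + b₁' = 1)
    (h₀ : Commute a₀ b₀) (h₁ : Commute a₁ b₀) (hA : a₀ * b₁' * ρ = 0)
    (hB : a₁' * b₁ * ρ = 0) (hC : a₁ * b₁' * ρ = 0) (hD : a₁ * b₀ * ρ = 0) :
    a₀ * b₀ * ρ = 0 := by
  have hb₁ρ : b₁ * ρ = a₁ * b₁ * ρ := by
    calc b₁ * ρ = (a₁ + a₁') * b₁ * ρ := by rw [ha₁, one_mul]
      _ = a₁ * b₁ * ρ := by rw [add_mul, add_mul, hB, add_zero]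
  have ha₁ρ : a₁ * ρ = a₁ * b₁ * ρ := by
    calc a₁ * ρ = a₁ * (b₁ + b₁') * ρ := by rw [hb₁, mul_one]
      _ = a₁ * b₁ * ρ := by rw [mul_add, add_mul, hC, add_zero]
  have ha₀ρ : a₀ * ρ = a₀ * a₁ * ρ := by
    calc a₀ * ρ = a₀ * (b₁ + b₁') * ρ := by rw [hb₁, mul_one]
      _ = a₀ * (b₁ * ρ) := by rw [mul_add, add_mul, hA, add_zero, mul_assoc]
      _ = a₀ * a₁ * ρ := by rw [hb₁ρ, ← ha₁ρ, mul_assoc]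
  calc a₀ * b₀ * ρ = b₀ * (a₀ * a₁ * ρ) := by rw [h₀.eq, mul_assoc, ha₀ρ]
    _ = a₀ * (a₁ * b₀ * ρ) := by simp only [← mul_assoc, h₀.eq, h₁.eq]
    _ = 0 := by rw [hD, mul_zero]

namespace Matrix

theorem PosSemidef.mul_eq_zero_of_trace_mul_eq_zero {𝕜 n : Type*} [RCLike 𝕜] [Fintype n]
    {S ρ : Matrix n n 𝕜} (hS : S.PosSemidef) (hρ : ρ.PosSemidef) (h : (S * ρ).trace = 0) :
    S * ρ = 0 := by
  classical
  obtain ⟨a, rfl⟩ := CStarAlgebra.nonneg_iff_eq_star_mul_self.mp hS.nonneg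
  obtain ⟨b, rfl⟩ := CStarAlgebra.nonneg_iff_eq_star_mul_self.mp hρ.nonneg
  simp only [star_eq_conjTranspose] at h ⊢
  have hab : a * bᴴ = 0 := by
    rw [← trace_conjTranspose_mul_self_eq_zero_iff, ← h, conjTranspose_mul,
      conjTranspose_conjTranspose, Matrix.mul_assoc, trace_mul_comm]
    simp only [Matrix.mul_assoc]
  rw [Matrix.mul_assoc, ← Matrix.mul_assoc a, hab, Matrix.zero_mul, Matrix.mul_zero]

theorem sum_kronecker_sum {α ι κ l m n p : Type*} [CommSemiring α] (s : Finset ι)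
    (t : Finset κ) (A : ι → Matrix l m α) (B : κ → Matrix n p α) :
    (∑ i ∈ s, A i) ⊗ₖ (∑ j ∈ t, B j) = ∑ i ∈ s, ∑ j ∈ t, A i ⊗ₖ B j := by
  ext
  simp only [kroneckerMap_apply, sum_apply, Finset.sum_mul, Finset.mul_sum]
  exact Finset.sum_comm

variable {α l m : Type*} [CommSemiring α] [Fintype l] [Fintype m] [DecidableEq l] [DecidableEq m]

theorem kronecker_one_mul_one_kronecker (A : Matrix l l α) (B : Matrix m m α) :
    (A ⊗ₖ 1) * (1 ⊗ₖ B) = A ⊗ₖ B := by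
  rw [← mul_kronecker_mul, Matrix.mul_one, Matrix.one_mul]

theorem one_kronecker_mul_kronecker_one (A : Matrix l l α) (B : Matrix m m α) :
    (1 ⊗ₖ B) * (A ⊗ₖ 1) = A ⊗ₖ B := by
  rw [← mul_kronecker_mul, Matrix.mul_one, Matrix.one_mul]

theorem commute_kronecker_one_one_kronecker (A : Matrix l l α) (B : Matrix m m α) :
    Commute (A ⊗ₖ 1) (1 ⊗ₖ B) := by
  rw [Commute, SemiconjBy, kronecker_one_mul_one_kronecker, one_kronecker_mul_kronecker_one]

end Matrix

section QuantumRealization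

variable {A B X Y m n : Type*} [Fintype m] [Fintype n]
  {P : A → B → X → Y → ℝ} {ρ : Matrix (m × n) (m × n) ℂ}
  {E : X → A → Matrix m m ℂ} {F : Y → B → Matrix n n ℂ}

theorem trace_sum_kronecker_sum_mul_eq_sum
    (hP : ∀ a b x y, (P a b x y : ℂ) = ∑ q : m × n, ∑ q' : m × n,
      E x a q.1 q'.1 * F y b q.2 q'.2 * ρ q' q)
    (s : Finset A) (t : Finset B) (x : X) (y : Y) :
    (((∑ a ∈ s, E x a) ⊗ₖ (∑ b ∈ t, F y b)) * ρ).trace = ∑ a ∈ s, ∑ b ∈ t, (P a b x y : ℂ) := by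
  simp only [sum_kronecker_sum, Finset.sum_mul, trace_sum, hP]
  rfl

theorem sum_kronecker_sum_mul_eq_zero_of_sum_eq_zero (hρ : ρ.PosSemidef)
    (hE : ∀ x a, (E x a).PosSemidef) (hF : ∀ y b, (F y b).PosSemidef)
    (hP : ∀ a b x y, (P a b x y : ℂ) = ∑ q : m × n, ∑ q' : m × n,
      E x a q.1 q'.1 * F y b q.2 q'.2 * ρ q' q)
    {s : Finset A} {t : Finset B} {x : X} {y : Y} (h : ∑ a ∈ s, ∑ b ∈ t, P a b x y = 0) :
    ((∑ a ∈ s, E x a) ⊗ₖ (∑ b ∈ t, F y b)) * ρ = 0 := by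
  refine ((posSemidef_sum s fun a _ ↦ hE x a).kronecker
    (posSemidef_sum t fun b _ ↦ hF y b)).mul_eq_zero_of_trace_mul_eq_zero hρ ?_
  rw [trace_sum_kronecker_sum_mul_eq_sum hP]
  exact_mod_cast h

theorem prob_eq_zero_of_singular_disagreement [Fintype A] [Fintype B] [DecidableEq A]
    [DecidableEq B] [DecidableEq m] [DecidableEq n] (hρ : ρ.PosSemidef)
    (hE : ∀ x a, (E x a).PosSemidef) (hEsum : ∀ x, ∑ a, E x a = 1)
    (hF : ∀ y b, (F y b).PosSemidef) (hFsum : ∀ y, ∑ b, F y b = 1)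
    (hP : ∀ a b x y, (P a b x y : ℂ) = ∑ q : m × n, ∑ q' : m × n,
      E x a q.1 q'.1 * F y b q.2 q'.2 * ρ q' q)
    {a₀ a₁ : A} {b₀ b₁ : B} {x₀ x₁ : X} {y₀ y₁ : Y}
    (hA : ∑ b ∈ univ.erase b₁, P a₀ b x₀ y₁ = 0) (hB : ∑ a ∈ univ.erase a₁, P a b₁ x₁ y₁ = 0)
    (hC : ∑ b ∈ univ.erase b₁, P a₁ b x₁ y₁ = 0) (hD : P a₁ b₀ x₁ y₀ = 0) :
    P a₀ b₀ x₀ y₀ = 0 := by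
  have null {s : Finset A} {t : Finset B} {x : X} {y : Y}
      (h : ∑ a ∈ s, ∑ b ∈ t, P a b x y = 0) :=
    sum_kronecker_sum_mul_eq_zero_of_sum_eq_zero hρ hE hF hP h
  have hEc : E x₁ a₁ + ∑ a ∈ univ.erase a₁, E x₁ a = 1 := by
    rw [add_sum_erase _ _ (mem_univ _), hEsum]
  have hFc : F y₁ b₁ + ∑ b ∈ univ.erase b₁, F y₁ b = 1 := by
    rw [add_sum_erase _ _ (mem_univ _), hFsum]
  have h₀₀ := mul_mul_eq_zero_of_singular_disagreement (ρ := ρ)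
    (by rw [← add_kronecker, hEc, one_kronecker_one])
    (by rw [← kronecker_add, hFc, one_kronecker_one])
    (commute_kronecker_one_one_kronecker (E x₀ a₀) (F y₀ b₀))
    (commute_kronecker_one_one_kronecker (E x₁ a₁) _)
    (by simpa only [kronecker_one_mul_one_kronecker, sum_singleton] using
      null (s := {a₀}) (by simpa only [sum_singleton] using hA))
    (by simpa only [kronecker_one_mul_one_kronecker, sum_singleton] using
      null (t := {b₁}) (by simpa only [sum_singleton] using hB))
    (by simpa only [kronecker_one_mul_one_kronecker, sum_singleton] using
      null (s := {a₁}) (by simpa only [sum_singleton] using hC))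
    (by simpa only [kronecker_one_mul_one_kronecker, sum_singleton] using
      null (s := {a₁}) (t := {b₀}) (by simpa only [sum_singleton] using hD))
  have := trace_sum_kronecker_sum_mul_eq_sum hP {a₀} {b₀} x₀ y₀
  rw [sum_singleton, sum_singleton, ← kronecker_one_mul_one_kronecker, h₀₀, trace_zero] at this
  simpa using this.symm

end QuantumRealization

/-- **Quantum agents cannot disagree singularly.** No quantum box, with arbitrary finite
input and output sets containing `{0,1}`, can exhibit singular disagreement. -/
theorem quantum_no_singular_disagreement
    {nA nB nX nY : ℕ} (hA : 2 ≤ nA) (hB : 2 ≤ nB) (hX : 2 ≤ nX) (hY : 2 ≤ nY)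
    (P : Fin nA → Fin nB → Fin nX → Fin nY → ℝ)
    (hq : IsQuantumBox P) :
    ¬ HasSD hA hB hX hY P := by
  rintro ⟨hcorr, hpos, ⟨hden₁, hcond₁⟩, hden₂, hcond₂⟩
  obtain ⟨dA, dB, ρ, E, F, hρ, -, hE, hEsum, hF, hFsum, hP⟩ := hq
  refine hpos.ne' (prob_eq_zero_of_singular_disagreement hρ hE hEsum hF hFsum hP
    (a₁ := ⟨1, hA⟩) (b₁ := ⟨1, hB⟩) (x₁ := ⟨1, hX⟩) (y₁ := ⟨1, hY⟩) ?_ ?_ ?_ ?_)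
  · rw [sum_erase_eq_sub (mem_univ _), ← (div_eq_one_iff_eq hden₁.ne').mp hcond₁, sub_self]
  · exact sum_eq_zero fun a ha ↦ hcorr _ _ fun h ↦ ne_of_mem_erase ha (Fin.ext h)
  · exact sum_eq_zero fun b hb ↦ hcorr _ _ fun h ↦ ne_of_mem_erase hb (Fin.ext h.symm)
  · exact (div_eq_zero_iff.mp hcond₂).resolve_right hden₂.ne'
end
end
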